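/- In the Weyl group W(D_8) of signed permutations of {1,...,8} with an even number of sign changes, acting on the 240 packings of PG(3,2) via the identification with maximal orthogonal 8-subsets of the 64 E_8 roots Ψ, the kernel of the action is exactly the center {1, w_0}, where w_0 is the total sign change on all 8 coordinates. -/

import Mathlib

/-- Membership in Ψ: the 64 E8 roots with all coordinates ±1/2, eighth coordinate 1/2,
and an even number of negative coordinates. -/
def IsPsi (α : Fin 8 → ℝ) : Prop :=
  (∀ i, α i = 1/2 ∨ α i = -(1/2)) ∧ α 7 = 1/2 ∧ Even {i : Fin 8 | α i = -(1/2)}.ncard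

/-- An element of Ω_Ψ: a maximal orthogonal subset of Ψ, i.e. 8 pairwise orthogonal
roots of Ψ.  These correspond to the 240 packings of PG(3,2). -/
def IsOmegaPsi (A : Set (Fin 8 → ℝ)) : Prop :=
  (∀ α ∈ A, IsPsi α) ∧ A.ncard = 8 ∧
    A.Pairwise (fun α β => ∑ i, α i * β i = 0)

/-- The action of a signed permutation g on a maximal orthogonal subset A of Ψ,
identifying each root β with the pair {β, −β}. -/
def psiAct (g : (Fin 8 → ℝ) →ₗ[ℝ] (Fin 8 → ℝ)) (A : Set (Fin 8 → ℝ)) : Set (Fin 8 → ℝ) :=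
  {β | IsPsi β ∧ ∃ α ∈ A, g α = β ∨ g α = -β}

/-!
A root of `Ψ` is `psiVec S`, the vector with entries `-1/2` on an even set `S ⊆ {0, …, 6}` and
`1/2` elsewhere. Two such roots are orthogonal iff their sets differ in exactly four places, and
the signed permutation `(σ, ε)` sends `psiVec S` to `psiVec (σ⁻¹ S ∆ N)`, where `N` is the set of
sign changes. Translating by `S` two copies of the [7,3,4] simplex code that share only the zero
word gives two elements of `Ω_Ψ` whose only common root is `psiVec S`; hence an element of the
kernel fixes every root up to sign, i.e. `σ⁻¹ S ∆ N ∈ {S, Sᶜ}` for all `S`. Taking `S = ∅` forces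
`N = ∅` or `N = univ`, and then taking for `S` the pairs in `{0, …, 6}` forces `σ = 1`.
-/

open Finset
open scoped symmDiff

theorem Finset.even_card_symmDiff {α : Type*} [DecidableEq α] {s t : Finset α}
    (hs : Even #s) (ht : Even #t) : Even #(s ∆ t) := by
  have hsub : #(s ∆ t) = #(s ∪ t) - #(s ∩ t) := by
    rw [symmDiff_eq_sup_sdiff_inf, sup_eq_union, inf_eq_inter,
      card_sdiff_of_subset inter_subset_union]
  have hsum := card_union_add_card_inter s t
  have hle : #(s ∩ t) ≤ #(s ∪ t) := card_le_card inter_subset_union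
  obtain ⟨a, ha⟩ := hs
  obtain ⟨b, hb⟩ := ht
  exact ⟨a + b - #(s ∩ t), by omega⟩

noncomputable def psiVec (S : Finset (Fin 8)) : Fin 8 → ℝ :=
  fun i => if i ∈ S then -(1/2) else 1/2

theorem psiVec_neg_iff {S : Finset (Fin 8)} {i : Fin 8} : psiVec S i < 0 ↔ i ∈ S := by
  by_cases h : i ∈ S <;> norm_num [psiVec, h]

theorem psiVec_injective : Function.Injective psiVec := by
  intro S T h
  ext i
  rw [← psiVec_neg_iff, h, psiVec_neg_iff]

theorem psiVec_compl (S : Finset (Fin 8)) : psiVec Sᶜ = -psiVec S := by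
  funext i
  by_cases h : i ∈ S <;> simp [psiVec, h]

theorem isPsi_psiVec {S : Finset (Fin 8)} (h7 : 7 ∉ S) (he : Even #S) : IsPsi (psiVec S) := by
  have hneg : {i : Fin 8 | psiVec S i = -(1/2)} = ↑S := by
    ext i
    by_cases h : i ∈ S <;> norm_num [psiVec, h]
  refine ⟨fun i => ?_, by simp [psiVec, h7], by rwa [hneg, Set.ncard_coe_finset]⟩
  by_cases h : i ∈ S <;> simp [psiVec, h]

theorem inner_psiVec_eq_zero {S T : Finset (Fin 8)} (h : #(S ∆ T) = 4) :
    ∑ i, psiVec S i * psiVec T i = 0 := by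
  have hterm : ∀ i, psiVec S i * psiVec T i = 1/4 + if i ∈ S ∆ T then -(1/2) else 0 := by
    intro i
    by_cases hS : i ∈ S <;> by_cases hT : i ∈ T <;> norm_num [psiVec, mem_symmDiff, hS, hT]
  simp only [hterm, sum_add_distrib, sum_ite_mem, univ_inter, sum_const, h, card_univ,
    Fintype.card_fin]
  norm_num

def IsOrthoCode (D : Finset (Finset (Fin 8))) : Prop :=
  #D = 8 ∧ ∅ ∈ D ∧ (∀ C ∈ D, 7 ∉ C ∧ Even #C) ∧ ∀ C ∈ D, ∀ C' ∈ D, C ≠ C' → #(C ∆ C') = 4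

/- Two copies of the [7,3,4] simplex code on the coordinates `0, …, 6`, sharing only the
zero word. -/
def simplexCode₁ : Finset (Finset (Fin 8)) :=
  {∅, {3,4,5,6}, {1,2,5,6}, {1,2,3,4}, {0,2,4,6}, {0,2,3,5}, {0,1,4,5}, {0,1,3,6}}

def simplexCode₂ : Finset (Finset (Fin 8)) :=
  {∅, {2,4,5,6}, {0,3,5,6}, {0,1,4,6}, {0,1,2,5}, {1,2,3,6}, {0,2,3,4}, {1,3,4,5}}

set_option maxRecDepth 10000 in
theorem isOrthoCode_simplexCode₁ : IsOrthoCode simplexCode₁ := by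
  unfold IsOrthoCode; decide

set_option maxRecDepth 10000 in
theorem isOrthoCode_simplexCode₂ : IsOrthoCode simplexCode₂ := by
  unfold IsOrthoCode; decide

theorem simplexCode₁_inter_simplexCode₂ : simplexCode₁ ∩ simplexCode₂ = {∅} := by
  decide

noncomputable def packing (D : Finset (Finset (Fin 8))) (S : Finset (Fin 8)) :
    Set (Fin 8 → ℝ) :=
  ↑(D.image fun C => psiVec (S ∆ C))

theorem isOmegaPsi_packing {D : Finset (Finset (Fin 8))} (hD : IsOrthoCode D)
    {S : Finset (Fin 8)} (hS7 : 7 ∉ S) (hSe : Even #S) : IsOmegaPsi (packing D S) := by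
  obtain ⟨hcard, -, hmem, hdist⟩ := hD
  have hinj : Function.Injective fun C => psiVec (S ∆ C) :=
    psiVec_injective.comp (symmDiff_right_injective S)
  refine ⟨?_, ?_, ?_⟩
  · simp only [packing, coe_image, Set.forall_mem_image, mem_coe]
    intro C hC
    refine isPsi_psiVec ?_ (Finset.even_card_symmDiff hSe (hmem C hC).2)
    simp [mem_symmDiff, hS7, (hmem C hC).1]
  · rw [packing, Set.ncard_coe_finset, card_image_of_injective _ hinj, hcard]
  · simp only [packing, coe_image]
    rintro _ ⟨C, hC, rfl⟩ _ ⟨C', hC', rfl⟩ hne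
    refine inner_psiVec_eq_zero ?_
    rw [symmDiff_symmDiff_symmDiff_comm, symmDiff_self, bot_symmDiff]
    exact hdist C hC C' hC' fun h => hne (h ▸ rfl)

theorem psiVec_mem_packing {D : Finset (Finset (Fin 8))} (hD : IsOrthoCode D)
    (S : Finset (Fin 8)) : psiVec S ∈ packing D S :=
  mem_coe.2 <| mem_image.2 ⟨∅, hD.2.1, by rw [← bot_eq_empty, symmDiff_bot]⟩

theorem symmDiff_mem_of_psiVec_mem_packing {D : Finset (Finset (Fin 8))} {S T : Finset (Fin 8)}
    (h : psiVec T ∈ packing D S) : S ∆ T ∈ D := by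
  obtain ⟨C, hC, hCT⟩ := mem_image.1 (mem_coe.1 h)
  rwa [← psiVec_injective hCT, symmDiff_symmDiff_cancel_left]

section SignedPermutation

variable {g : (Fin 8 → ℝ) →ₗ[ℝ] (Fin 8 → ℝ)}

theorem eq_of_apply_psiVec_eq_or_neg (H : ∀ A, IsOmegaPsi A → psiAct g A = A)
    {S T : Finset (Fin 8)} (hS7 : 7 ∉ S) (hSe : Even #S) (hT7 : 7 ∉ T) (hTe : Even #T)
    (h : g (psiVec S) = psiVec T ∨ g (psiVec S) = -psiVec T) : T = S := by
  have hmem : ∀ D, IsOrthoCode D → S ∆ T ∈ D := fun D hD => by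
    refine symmDiff_mem_of_psiVec_mem_packing ?_
    rw [← H _ (isOmegaPsi_packing hD hS7 hSe)]
    exact ⟨isPsi_psiVec hT7 hTe, psiVec S, psiVec_mem_packing hD S, h⟩
  have hST : S ∆ T ∈ simplexCode₁ ∩ simplexCode₂ :=
    mem_inter.2 ⟨hmem _ isOrthoCode_simplexCode₁, hmem _ isOrthoCode_simplexCode₂⟩
  rw [simplexCode₁_inter_simplexCode₂, mem_singleton, ← bot_eq_empty, symmDiff_eq_bot] at hST
  exact hST.symm

theorem exists_eq_psiVec_or_neg {U : Finset (Fin 8)} (hU : Even #U) :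
    ∃ T, 7 ∉ T ∧ Even #T ∧ (psiVec U = psiVec T ∨ psiVec U = -psiVec T) := by
  by_cases h7 : 7 ∈ U
  · refine ⟨Uᶜ, notMem_compl.2 h7, ?_, Or.inr (by rw [psiVec_compl, neg_neg])⟩
    rw [card_compl, Fintype.card_fin]
    obtain ⟨k, hk⟩ := hU
    exact ⟨4 - k, by omega⟩
  · exact ⟨U, h7, hU, Or.inl rfl⟩

variable {σ : Equiv.Perm (Fin 8)} {ε : Fin 8 → ℝ}

noncomputable def signFlips (ε : Fin 8 → ℝ) : Finset (Fin 8) := univ.filter fun i => ε i = -1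

theorem apply_psiVec (hε : ∀ i, ε i = 1 ∨ ε i = -1)
    (hg : ∀ (v : Fin 8 → ℝ) (i : Fin 8), g v i = ε i * v (σ i)) (S : Finset (Fin 8)) :
    g (psiVec S) = psiVec (S.map σ.symm.toEmbedding ∆ signFlips ε) := by
  funext i
  rw [hg]
  rcases hε i with h | h <;> by_cases hi : σ i ∈ S <;>
    norm_num [psiVec, signFlips, mem_symmDiff, mem_map_equiv, h, hi]

theorem map_symmDiff_signFlips_eq_or_compl (H : ∀ A, IsOmegaPsi A → psiAct g A = A)
    (hε : ∀ i, ε i = 1 ∨ ε i = -1) (heven : Even #(signFlips ε))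
    (hg : ∀ (v : Fin 8 → ℝ) (i : Fin 8), g v i = ε i * v (σ i))
    {S : Finset (Fin 8)} (hS7 : 7 ∉ S) (hSe : Even #S) :
    S.map σ.symm.toEmbedding ∆ signFlips ε = S ∨ S.map σ.symm.toEmbedding ∆ signFlips ε = Sᶜ := by
  set U := S.map σ.symm.toEmbedding ∆ signFlips ε
  have hUe : Even #U := Finset.even_card_symmDiff (by rwa [card_map]) heven
  obtain ⟨T, hT7, hTe, hUT⟩ := exists_eq_psiVec_or_neg hUe
  have hTS := eq_of_apply_psiVec_eq_or_neg H hS7 hSe hT7 hTe (apply_psiVec hε hg S ▸ hUT)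
  subst hTS
  rcases hUT with hUT | hUT
  · exact Or.inl (psiVec_injective hUT)
  · exact Or.inr (psiVec_injective (by rw [hUT, psiVec_compl]))

end SignedPermutation

theorem IsPsi.ne_neg {α β : Fin 8 → ℝ} (hα : IsPsi α) (hβ : IsPsi β) : α ≠ -β := by
  intro h
  have h7 := congrFun h 7
  rw [Pi.neg_apply, hα.2.1, hβ.2.1] at h7
  norm_num at h7

theorem psiAct_eq_self {g : (Fin 8 → ℝ) →ₗ[ℝ] (Fin 8 → ℝ)} (hg : ∀ α, g α = α ∨ g α = -α)
    {A : Set (Fin 8 → ℝ)} (hA : ∀ α ∈ A, IsPsi α) : psiAct g A = A := by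
  ext β
  refine ⟨fun ⟨hβ, α, hα, hαβ⟩ => ?_, fun hβ => ⟨hA β hβ, β, hβ, hg β⟩⟩
  have hne := (hA α hα).ne_neg hβ
  rcases hg α with h | h <;> rcases hαβ with h' | h' <;> rw [h] at h'
  · exact h' ▸ hα
  · exact absurd h' hne
  · exact absurd (neg_eq_iff_eq_neg.1 h') hne
  · exact neg_injective h' ▸ hα

theorem Equiv.Perm.eq_one_of_map_eq_or_compl {σ : Equiv.Perm (Fin 8)}
    (h : ∀ S : Finset (Fin 8), 7 ∉ S → Even #S →
      S.map σ.symm.toEmbedding = S ∨ S.map σ.symm.toEmbedding = Sᶜ) : σ = 1 := by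
  have hpair : ∀ i b : Fin 8, b ≠ i → i ≠ 7 → b ≠ 7 → σ i = i ∨ σ i = b := by
    intro i b hbi hi hb
    have hcard : #{i, b} = 2 := card_pair hbi.symm
    have hmap : Finset.map σ.symm.toEmbedding {i, b} = {i, b} := by
      refine (h _ (by simp [hi.symm, hb.symm]) (by rw [hcard]; decide)).resolve_right fun hc => ?_
      have := congrArg card hc
      rw [card_map, card_compl, Fintype.card_fin, hcard] at this
      omega
    have hσi := mem_map_equiv.1 (hmap ▸ mem_insert_self i {b})
    simpa using hσi
  have hfix : ∀ i, i ≠ 7 → σ i = i := by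
    intro i hi
    obtain ⟨b, c, hbc, hbi, hci, hb, hc⟩ :
        ∃ b c : Fin 8, b ≠ c ∧ b ≠ i ∧ c ≠ i ∧ b ≠ 7 ∧ c ≠ 7 := by
      revert i; decide
    rcases hpair i b hbi hi hb with h₁ | h₁
    · exact h₁
    rcases hpair i c hci hi hc with h₂ | h₂
    · exact h₂
    exact absurd (h₁.symm.trans h₂) hbc
  refine Equiv.ext fun i => ?_
  rw [Equiv.Perm.one_apply]
  by_cases hi : i = 7
  · subst hi
    by_contra hne
    exact hne (σ.injective (hfix _ hne))
  · exact hfix i hi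

theorem eq_one_and_eq_empty_or_univ_of_map_symmDiff {σ : Equiv.Perm (Fin 8)}
    {N : Finset (Fin 8)} (h : ∀ S : Finset (Fin 8), 7 ∉ S → Even #S →
      S.map σ.symm.toEmbedding ∆ N = S ∨ S.map σ.symm.toEmbedding ∆ N = Sᶜ) :
    σ = 1 ∧ (N = ∅ ∨ N = univ) := by
  have hN : N = ∅ ∨ N = univ := by
    have h₀ := h ∅ (notMem_empty 7) (by simp)
    rwa [map_empty, compl_empty, ← bot_eq_empty, bot_symmDiff] at h₀
  refine ⟨Equiv.Perm.eq_one_of_map_eq_or_compl fun S hS7 hSe => ?_, hN⟩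
  rcases hN with rfl | rfl
  · simpa only [← bot_eq_empty, symmDiff_bot] using h S hS7 hSe
  · rcases h S hS7 hSe with h' | h' <;>
      rw [← top_eq_univ, symmDiff_top, hnot_eq_compl] at h'
    · exact Or.inr (compl_eq_comm.1 h').symm
    · exact Or.inl (compl_injective h')

theorem eq_id_or_eq_neg_id_of_signFlips {g : (Fin 8 → ℝ) →ₗ[ℝ] (Fin 8 → ℝ)} {ε : Fin 8 → ℝ}
    (hε : ∀ i, ε i = 1 ∨ ε i = -1) (hg : ∀ (v : Fin 8 → ℝ) (i : Fin 8), g v i = ε i * v i)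
    (hN : signFlips ε = ∅ ∨ signFlips ε = univ) : g = LinearMap.id ∨ g = -LinearMap.id := by
  rcases hN with hN | hN
  · have hε1 : ∀ i, ε i = 1 := fun i =>
      (hε i).resolve_right fun h => notMem_empty i (hN ▸ mem_filter.2 ⟨mem_univ i, h⟩)
    exact Or.inl (LinearMap.ext fun v => funext fun i => by simp [hg, hε1])
  · have hε1 : ∀ i, ε i = -1 := fun i => (mem_filter.1 (hN ▸ mem_univ i : i ∈ signFlips ε)).2
    exact Or.inr (LinearMap.ext fun v => funext fun i => by simp [hg, hε1])

/-- An element of W(D_8) acting on R^8: a signed permutation with an even number of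
sign changes acts trivially on all of Ω_Ψ (hence on the 240 packings of PG(3,2))
if and only if it is the identity or the longest element w₀ = −1.  In other words,
the kernel of the action of W(D_8) on the packings is exactly the centre {1, w₀}. -/
theorem kernel_of_D8_action
    (g : (Fin 8 → ℝ) →ₗ[ℝ] (Fin 8 → ℝ)) (σ : Equiv.Perm (Fin 8)) (ε : Fin 8 → ℝ)
    (hε : ∀ i, ε i = 1 ∨ ε i = -1)
    (heven : Even {i : Fin 8 | ε i = -1}.ncard)
    (hg : ∀ (v : Fin 8 → ℝ) (i : Fin 8), g v i = ε i * v (σ i)) :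
    (∀ A : Set (Fin 8 → ℝ), IsOmegaPsi A → psiAct g A = A) ↔
      (g = LinearMap.id ∨ g = -LinearMap.id) := by
  refine ⟨fun H => ?_, fun h A hA => psiAct_eq_self (fun α => ?_) hA.1⟩
  · have hN : Even #(signFlips ε) := by
      rwa [← Set.ncard_coe_finset, signFlips, coe_filter_univ]
    obtain ⟨rfl, hN⟩ := eq_one_and_eq_empty_or_univ_of_map_symmDiff fun S hS7 hSe =>
      map_symmDiff_signFlips_eq_or_compl H hε hN hg hS7 hSe
    exact eq_id_or_eq_neg_id_of_signFlips hε (by simpa using hg) hN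
  · rcases h with rfl | rfl
    · exact Or.inl rfl
    · exact Or.inr rfl
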